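/- Let x ∈ ℝʳ have all coordinates nonzero, with at least two consecutive coordinates of the same sign, and let A be an r×r matrix that is totally positive of order r−1 (all proper minors positive). Then there exists i ∈ [r] such that xᵢ(Ax)ᵢ > 0. -/

import Mathlib

/-!
Suppose `xᵢ (Ax)ᵢ ≤ 0` for every `i`. Group the coordinates of `x` into maximal blocks of
constant sign; since two neighbours share a sign there are `k + 1 ≤ r - 1` blocks, numbered by
the running count of sign changes. Summing the columns of `A` over each block with positive
weights proportional to `|x_j|` gives an `r × (k + 1)` matrix `B` which is totally positive:
by multilinearity each of its minors is a positive combination of minors of `A` of size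
`≤ k + 1 < r`. With `ε = (1, -1, 1, …)`, `B ε` is a nonzero multiple of `A x`, so the square
matrix `C` formed by one row of `B` from each block satisfies `εᵤ (C ε)ᵤ ≤ 0` for all `u`.
That is impossible for a totally positive `C`: in row `0` of `adj C · C ε = det C · ε` the
cofactors alternate in sign like `ε`.
-/

open Finset Matrix

theorem Nat.exists_le_eq_of_map_succ_le_succ {f : ℕ → ℕ} (hf : ∀ n, f (n + 1) ≤ f n + 1)
    {m t : ℕ} (h0 : f 0 ≤ t) (ht : t ≤ f m) : ∃ n ≤ m, f n = t := by
  induction m with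
  | zero => exact ⟨0, le_rfl, by omega⟩
  | succ m ih =>
    by_cases htm : t ≤ f m
    · obtain ⟨n, hnm, hn⟩ := ih htm
      exact ⟨n, by omega, hn⟩
    · exact ⟨m + 1, le_rfl, by have := hf m; omega⟩

section SignChanges

variable {R : Type*} [CommRing R] [LinearOrder R] {r : ℕ} (x : Fin r → R)

def signChanges (n : ℕ) : ℕ :=
  #{j ∈ range n | ∃ h : j + 1 < r, x ⟨j, Nat.lt_of_succ_lt h⟩ * x ⟨j + 1, h⟩ < 0}

theorem signChanges_zero : signChanges x 0 = 0 := rfl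

theorem signChanges_succ (n : ℕ) :
    signChanges x (n + 1) = signChanges x n +
      if ∃ h : n + 1 < r, x ⟨n, Nat.lt_of_succ_lt h⟩ * x ⟨n + 1, h⟩ < 0 then 1
      else 0 := by
  rw [signChanges, range_add_one, filter_insert]
  split_ifs with h
  · rw [card_insert_of_notMem (by simp)]
    rfl
  · rfl

theorem signChanges_succ_le (n : ℕ) : signChanges x (n + 1) ≤ signChanges x n + 1 := by
  rw [signChanges_succ]
  split_ifs <;> omega

theorem signChanges_mono : Monotone (signChanges x) := fun _ _ hmn =>
  card_le_card (filter_subset_filter _ (range_subset_range.2 hmn))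

theorem signChanges_lt {i : ℕ} (hi : i + 1 < r)
    (hsame : 0 < x ⟨i, Nat.lt_of_succ_lt hi⟩ * x ⟨i + 1, hi⟩) :
    signChanges x (r - 1) < r - 1 := by
  refine (card_lt_card (ssubset_iff_of_subset (filter_subset _ _) |>.2 ⟨i, ?_, ?_⟩)).trans_eq
    (card_range _)
  · simp only [mem_range]; omega
  · simp only [mem_filter, not_and, not_exists, not_lt]
    exact fun _ _ => hsame.le

theorem signChanges_sign [IsStrictOrderedRing R] (hx0 : ∀ i, x i ≠ 0) (hr : 0 < r) (n : ℕ)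
    (hn : n < r) :
    0 < x ⟨0, hr⟩ * (-1) ^ signChanges x n * x ⟨n, hn⟩ := by
  induction n with
  | zero => simpa [signChanges_zero] using mul_self_pos.2 (hx0 _)
  | succ n ih =>
    have ih := ih (by omega)
    have hsq : 0 < x ⟨n, by omega⟩ * x ⟨n, by omega⟩ := mul_self_pos.2 (hx0 _)
    rcases (mul_ne_zero (hx0 ⟨n, by omega⟩) (hx0 ⟨n + 1, hn⟩)).lt_or_gt with hflip | hsame
    · rw [signChanges_succ, if_pos ⟨hn, hflip⟩, pow_succ]
      nlinarith
    · rw [signChanges_succ, if_neg fun ⟨_, h⟩ => lt_asymm h hsame, add_zero]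
      nlinarith

end SignChanges

theorem exists_monotone_surjective_alternating_sign {R : Type*} [CommRing R] [LinearOrder R]
    [IsStrictOrderedRing R] {r : ℕ} (x : Fin r → R) (hx0 : ∀ i, x i ≠ 0)
    (hsame : ∃ i : ℕ, ∃ h : i + 1 < r,
      0 < x ⟨i, Nat.lt_of_succ_lt h⟩ * x ⟨i + 1, h⟩) :
    ∃ k, k + 1 < r ∧ ∃ φ : Fin r → Fin (k + 1), Monotone φ ∧ Function.Surjective φ ∧
      ∃ s : R, ∀ l, 0 < s * (-1) ^ (φ l : ℕ) * x l := by
  obtain ⟨i, hi, hsame⟩ := hsame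
  have hr : 0 < r := by omega
  have hk := signChanges_lt x hi hsame
  let φ : Fin r → Fin (signChanges x (r - 1) + 1) := fun l =>
    ⟨signChanges x l, Nat.lt_succ_of_le (signChanges_mono x (by omega))⟩
  refine ⟨signChanges x (r - 1), by omega, φ, fun a b hab => signChanges_mono x hab, ?_,
    x ⟨0, hr⟩, fun l => signChanges_sign x hx0 hr l l.2⟩
  intro t
  obtain ⟨n, hn, hnt⟩ := Nat.exists_le_eq_of_map_succ_le_succ (signChanges_succ_le x)
    (by simp [signChanges_zero]) (Nat.lt_succ_iff.1 t.2)
  exact ⟨⟨n, by omega⟩, Fin.ext hnt⟩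

namespace Matrix

variable {R : Type*} [CommRing R]

theorem det_of_sum_smul_col {n ι : Type*} [Fintype n] [DecidableEq n] [DecidableEq ι]
    (M : Matrix n ι R) (c : ι → R) (T : n → Finset ι) :
    (of fun t u => ∑ l ∈ T u, c l * M t l).det =
      ∑ q ∈ Fintype.piFinset T, (∏ u, c (q u)) * (M.submatrix id q).det := by
  rw [← det_transpose]
  have hcols : (of fun t u => ∑ l ∈ T u, c l * M t l)ᵀ =
      fun u => ∑ l ∈ T u, c l • fun t => M t l := by
    ext u t
    simp
  rw [hcols]
  refine (detRowAlternating.toMultilinearMap.map_sum_finset _ T).trans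
    (sum_congr rfl fun q _ => ?_)
  rw [MultilinearMap.map_smul_univ, smul_eq_mul]
  exact congrArg _ (det_transpose (M.submatrix id q))

def blockColumnSum {m n k : Type*} [Fintype n] [DecidableEq k] (A : Matrix m n R) (w : n → R)
    (φ : n → k) : Matrix m k R :=
  of fun i u => ∑ l with φ l = u, w l * A i l

theorem blockColumnSum_mulVec {m n k : Type*} [Fintype n] [Fintype k] [DecidableEq k]
    (A : Matrix m n R) (w : n → R) (φ : n → k) (v : k → R) :
    blockColumnSum A w φ *ᵥ v = A *ᵥ fun l => w l * v (φ l) := by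
  ext i
  simp only [mulVec, dotProduct, blockColumnSum, of_apply, sum_mul]
  rw [← sum_fiberwise univ φ (fun l => A i l * (w l * v (φ l)))]
  refine sum_congr rfl fun u _ => sum_congr rfl fun l hl => ?_
  rw [(mem_filter.1 hl).2]
  ring

variable [LinearOrder R]

def IsTotallyPositive {m n : ℕ} (A : Matrix (Fin m) (Fin n) R) : Prop :=
  ∀ p (f : Fin p → Fin m) (g : Fin p → Fin n), StrictMono f → StrictMono g →
    0 < (A.submatrix f g).det

theorem IsTotallyPositive.submatrix {m n p : ℕ} {A : Matrix (Fin m) (Fin n) R}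
    (hA : A.IsTotallyPositive) {ρ : Fin p → Fin m} (hρ : StrictMono ρ) :
    (A.submatrix ρ id).IsTotallyPositive := fun q f g hf hg => by
  simpa using hA q (ρ ∘ f) g (hρ.comp hf) hg

variable [IsStrictOrderedRing R]

theorem isTotallyPositive_blockColumnSum {m n k : ℕ} (A : Matrix (Fin m) (Fin n) R)
    (hA : ∀ p ≤ k, ∀ (f : Fin p → Fin m) (g : Fin p → Fin n),
      StrictMono f → StrictMono g → 0 < (A.submatrix f g).det)
    {w : Fin n → R} (hw : ∀ l, 0 < w l) {φ : Fin n → Fin k} (hφ : Monotone φ)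
    (hφs : Function.Surjective φ) :
    (blockColumnSum A w φ).IsTotallyPositive := by
  intro p f g hf hg
  have hp : p ≤ k := by simpa using Fintype.card_le_of_injective g hg.injective
  show 0 < (of fun t u => ∑ l with φ l = g u, w l * (A.submatrix f id) t l).det
  rw [det_of_sum_smul_col]
  refine sum_pos (fun q hq => ?_) ?_
  · have hφq : ∀ u, φ (q u) = g u := by simpa using hq
    have hq : StrictMono q := fun a b hab => hφ.reflect_lt (by simpa [hφq] using hg hab)
    exact mul_pos (prod_pos fun u _ => hw _) (by simpa using hA p hp f q hf hq)
  · simpa [Fintype.piFinset_nonempty, filter_nonempty_iff] using fun u => hφs (g u)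

theorem IsTotallyPositive.exists_pos_alternating_mul_mulVec_alternating {n : ℕ}
    {C : Matrix (Fin (n + 1)) (Fin (n + 1)) R} (hC : C.IsTotallyPositive) :
    ∃ u : Fin (n + 1), 0 < (-1) ^ (u : ℕ) * (C *ᵥ fun v => (-1) ^ (v : ℕ)) u := by
  by_contra! hneg
  set ε : Fin (n + 1) → R := fun v => (-1) ^ (v : ℕ)
  have hdet : 0 < C.det := by simpa using hC (n + 1) id id strictMono_id strictMono_id
  have hrow : (C.adjugate *ᵥ (C *ᵥ ε)) 0 = C.det := by
    simp [mulVec_mulVec, adjugate_mul, smul_mulVec, ε]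
  have hterm : ∀ u, C.adjugate 0 u * (C *ᵥ ε) u ≤ 0 := fun u => by
    rw [adjugate_fin_succ_eq_det_submatrix, Fin.val_zero, add_zero, mul_comm _ (det _),
      mul_assoc]
    exact mul_nonpos_of_nonneg_of_nonpos
      (hC n _ _ (Fin.strictMono_succAbove u) (Fin.strictMono_succAbove 0)).le (hneg u)
  have hsum : ∑ u, C.adjugate 0 u * (C *ᵥ ε) u ≤ 0 := sum_nonpos fun u _ => hterm u
  exact hsum.not_gt (hdet.trans_eq hrow.symm)

end Matrix

/-- If `x ∈ ℝʳ` has all coordinates nonzero with at least two consecutive coordinates of the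
same sign, and `A` is `TP_{r-1}` (all minors of size at most `r-1` positive), then `A` does
not reverse the sign of `x`: there is `i` with `xᵢ (Ax)ᵢ > 0`. -/
theorem stmt15 {r : ℕ} (x : Fin r → ℝ) (hx0 : ∀ i, x i ≠ 0)
    (hsame : ∃ i : ℕ, ∃ h : i + 1 < r, 0 < x ⟨i, by omega⟩ * x ⟨i + 1, h⟩)
    (A : Matrix (Fin r) (Fin r) ℝ)
    (hTP : ∀ p : ℕ, p < r → ∀ (f g : Fin p → Fin r), StrictMono f → StrictMono g →
      0 < (A.submatrix f g).det) :
    ∃ i : Fin r, 0 < x i * (A.mulVec x) i := by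
  by_contra! hcon
  obtain ⟨k, hkr, φ, hφ, hφs, s, hs⟩ :=
    exists_monotone_surjective_alternating_sign x hx0 hsame
  obtain ⟨ρ, hρ⟩ := hφs.hasRightInverse
  have hρ_mono : StrictMono ρ := fun a b hab => hφ.reflect_lt (by rwa [hρ a, hρ b])
  set B := blockColumnSum A (fun l => s * (-1) ^ (φ l : ℕ) * x l) φ
  have hB : B.IsTotallyPositive :=
    isTotallyPositive_blockColumnSum A (fun p hp => hTP p (by omega)) hs hφ hφs
  obtain ⟨u, hu⟩ := (hB.submatrix hρ_mono).exists_pos_alternating_mul_mulVec_alternating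
  have hw : (fun l => s * (-1) ^ (φ l : ℕ) * x l * (-1) ^ (φ l : ℕ)) = s • x :=
    funext fun l => by
      rw [Pi.smul_apply, smul_eq_mul, mul_right_comm, mul_assoc s, ← pow_add,
        Even.neg_one_pow ⟨_, rfl⟩, mul_one]
  have hBx : (B.submatrix ρ id *ᵥ fun v => (-1) ^ (v : ℕ)) u = s * (A *ᵥ x) (ρ u) := by
    change (B *ᵥ fun v => (-1) ^ (v : ℕ)) (ρ u) = _
    rw [blockColumnSum_mulVec, hw, mulVec_smul, Pi.smul_apply, smul_eq_mul]
  have hsu : 0 < s * (-1) ^ (u : ℕ) * x (ρ u) := by simpa [hρ u] using hs (ρ u)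
  rw [hBx] at hu
  nlinarith [mul_pos hu hsu, mul_nonpos_of_nonneg_of_nonpos (sq_nonneg (s * (-1) ^ (u : ℕ)))
    (hcon (ρ u))]
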